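/- Let u, v ∈ ℝ³ with u ≠ 0 and v − ⟨v, u/‖u‖⟩ (u/‖u‖) ≠ 0, and let O ∈ ℝ^{3×3} satisfy OᵀO = I and det(O) = −1. Then GS(O u, O v) = O · GS(u, v) · D, where D is the diagonal matrix diag(1, 1, −1); equivalently, the first two columns of GS(O u, O v) are O e₁ and O e₂ while the third column is −O e₃. In particular GS(O u, O v) ≠ O · GS(u, v), so the Gram–Schmidt local reference frame is not equivariant under reflections. -/

import Mathlib

open Matrix

/-- Euclidean norm on `Fin 3 → ℝ`. -/
noncomputable def euclNorm (a : Fin 3 → ℝ) : ℝ := Real.sqrt (a ⬝ᵥ a)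

/-- The Gram–Schmidt local reference frame: the `3 × 3` matrix with columns
`e₁ = u/‖u‖`, `e₂ = (v − ⟨v,e₁⟩e₁)/‖v − ⟨v,e₁⟩e₁‖`, `e₃ = e₁ × e₂`. -/
noncomputable def GS (u v : Fin 3 → ℝ) : Matrix (Fin 3) (Fin 3) ℝ :=
  let e₁ : Fin 3 → ℝ := (euclNorm u)⁻¹ • u
  let w : Fin 3 → ℝ := v - (v ⬝ᵥ e₁) • e₁
  let e₂ : Fin 3 → ℝ := (euclNorm w)⁻¹ • w
  let e₃ : Fin 3 → ℝ := crossProduct e₁ e₂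
  Matrix.of fun i j => ![e₁, e₂, e₃] j i

/-! An orthogonal `O` preserves dot products, hence norms, so it commutes with the
normalisation and projection steps of Gram–Schmidt. Only the cross product sees orientation:
the adjugate of an orthogonal matrix is `det O • Oᵀ`, so `(O a) ⨯₃ (O b) = det O • O (a ⨯₃ b)`.
This gives `GS (O u) (O v) = O * GS u v * diag(1, 1, det O)`. Under the hypotheses `e₁, e₂` are
orthonormal, so `det (GS u v) = ‖e₁ ⨯₃ e₂‖² = 1`, and comparing determinants rules out
`GS (O u) (O v) = O * GS u v` when `det O = -1`. -/

section CommRing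

variable {R : Type*} [CommRing R]

theorem cross_mulVec_mulVec (M : Matrix (Fin 3) (Fin 3) R) (a b : Fin 3 → R) :
    (M *ᵥ a) ⨯₃ (M *ᵥ b) = (adjugate M)ᵀ *ᵥ (a ⨯₃ b) := by
  ext i
  fin_cases i <;>
    simp [cross_apply, mulVec, dotProduct, Fin.sum_univ_three, adjugate_fin_three] <;> ring

theorem adjugate_eq_det_smul_transpose {n : Type*} [Fintype n] [DecidableEq n]
    {O : Matrix n n R} (h : Oᵀ * O = 1) : adjugate O = O.det • Oᵀ := by
  calc adjugate O = adjugate O * (O * Oᵀ) := by rw [mul_eq_one_comm.mp h, Matrix.mul_one]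
    _ = O.det • Oᵀ := by rw [← Matrix.mul_assoc, adjugate_mul, smul_mul, Matrix.one_mul]

theorem cross_mulVec_mulVec_of_transpose_mul_self {O : Matrix (Fin 3) (Fin 3) R}
    (h : Oᵀ * O = 1) (a b : Fin 3 → R) :
    (O *ᵥ a) ⨯₃ (O *ᵥ b) = O.det • O *ᵥ (a ⨯₃ b) := by
  rw [cross_mulVec_mulVec, adjugate_eq_det_smul_transpose h, transpose_smul, transpose_transpose,
    smul_mulVec]

theorem mul_transpose_of_mul_diagonal_fin_three (O : Matrix (Fin 3) (Fin 3) R)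
    (a b c : Fin 3 → R) (x y z : R) :
    O * (of ![a, b, c])ᵀ * diagonal ![x, y, z]
      = (of ![x • O *ᵥ a, y • O *ᵥ b, z • O *ᵥ c])ᵀ := by
  ext i j
  fin_cases j <;> simp [mul_apply, mulVec, dotProduct, Fin.sum_univ_three, mul_comm]

theorem det_transpose_of_eq_triple_product (a b c : Fin 3 → R) :
    det (of ![a, b, c])ᵀ = a ⬝ᵥ b ⨯₃ c := by
  rw [det_transpose, triple_product_eq_det]
  rfl

variable {n : Type*} [Fintype n]

theorem dotProduct_mulVec_mulVec_of_transpose_mul_self [DecidableEq n] {O : Matrix n n R}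
    (h : Oᵀ * O = 1) (a b : n → R) : (O *ᵥ a) ⬝ᵥ (O *ᵥ b) = a ⬝ᵥ b := by
  rw [dotProduct_mulVec, ← vecMul_transpose, vecMul_vecMul, h, vecMul_one]

def rejection (v e : n → R) : n → R := v - (v ⬝ᵥ e) • e

theorem dotProduct_rejection {e : n → R} (he : e ⬝ᵥ e = 1) (v : n → R) :
    e ⬝ᵥ rejection v e = 0 := by
  rw [rejection, dotProduct_sub, dotProduct_smul, he, smul_eq_mul, mul_one, dotProduct_comm,
    sub_self]

theorem rejection_mulVec_of_transpose_mul_self [DecidableEq n] {O : Matrix n n R}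
    (h : Oᵀ * O = 1) (v e : n → R) :
    rejection (O *ᵥ v) (O *ᵥ e) = O *ᵥ rejection v e := by
  rw [rejection, rejection, dotProduct_mulVec_mulVec_of_transpose_mul_self h, mulVec_sub,
    mulVec_smul]

end CommRing

noncomputable def euclNormalize (a : Fin 3 → ℝ) : Fin 3 → ℝ := (euclNorm a)⁻¹ • a

theorem euclNormalize_dotProduct_self {a : Fin 3 → ℝ} (ha : a ≠ 0) :
    euclNormalize a ⬝ᵥ euclNormalize a = 1 := by
  have hpos : 0 < a ⬝ᵥ a := by simpa using dotProduct_self_star_pos_iff.mpr ha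
  rw [euclNormalize, euclNorm, smul_dotProduct, dotProduct_smul, smul_eq_mul, smul_eq_mul,
    ← mul_assoc, ← mul_inv, Real.mul_self_sqrt hpos.le, inv_mul_cancel₀ hpos.ne']

theorem euclNormalize_mulVec_of_transpose_mul_self {O : Matrix (Fin 3) (Fin 3) ℝ}
    (h : Oᵀ * O = 1) (a : Fin 3 → ℝ) : euclNormalize (O *ᵥ a) = O *ᵥ euclNormalize a := by
  rw [euclNormalize, euclNormalize, euclNorm, euclNorm,
    dotProduct_mulVec_mulVec_of_transpose_mul_self h, mulVec_smul]

theorem GS_eq_transpose_of (u v : Fin 3 → ℝ) :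
    GS u v = (of ![euclNormalize u, euclNormalize (rejection v (euclNormalize u)),
      euclNormalize u ⨯₃ euclNormalize (rejection v (euclNormalize u))])ᵀ :=
  rfl

theorem GS_mulVec_of_transpose_mul_self {O : Matrix (Fin 3) (Fin 3) ℝ} (h : Oᵀ * O = 1)
    (u v : Fin 3 → ℝ) : GS (O *ᵥ u) (O *ᵥ v) = O * GS u v * diagonal ![1, 1, O.det] := by
  rw [GS_eq_transpose_of, GS_eq_transpose_of, mul_transpose_of_mul_diagonal_fin_three,
    euclNormalize_mulVec_of_transpose_mul_self h, rejection_mulVec_of_transpose_mul_self h,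
    euclNormalize_mulVec_of_transpose_mul_self h, cross_mulVec_mulVec_of_transpose_mul_self h,
    one_smul, one_smul]

theorem det_GS {u v : Fin 3 → ℝ} (hu : u ≠ 0) (hw : rejection v (euclNormalize u) ≠ 0) :
    (GS u v).det = 1 := by
  set e₁ := euclNormalize u
  set e₂ := euclNormalize (rejection v e₁)
  have h₁ : e₁ ⬝ᵥ e₁ = 1 := euclNormalize_dotProduct_self hu
  have h₂ : e₂ ⬝ᵥ e₂ = 1 := euclNormalize_dotProduct_self hw
  have h₁₂ : e₁ ⬝ᵥ e₂ = 0 := by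
    simp only [e₂, euclNormalize, dotProduct_smul, dotProduct_rejection h₁, smul_zero]
  rw [GS_eq_transpose_of, det_transpose_of_eq_triple_product, triple_product_permutation,
    triple_product_permutation, cross_dot_cross, h₁, h₂, h₁₂, dotProduct_comm, h₁₂]
  ring

/-- For `u ≠ 0`, `v − ⟨v, u/‖u‖⟩(u/‖u‖) ≠ 0` and a reflection `O`
(`Oᵀ * O = 1`, `det O = -1`), one has `GS (O u) (O v) = O * GS u v * diag(1,1,−1)`,
and in particular `GS (O u) (O v) ≠ O * GS u v`: the Gram–Schmidt local
reference frame is not equivariant under reflections. -/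
theorem GS_not_equivariant_reflection
    (u v : Fin 3 → ℝ) (hu : u ≠ 0)
    (hw : v - (v ⬝ᵥ ((euclNorm u)⁻¹ • u)) • ((euclNorm u)⁻¹ • u) ≠ 0)
    (O : Matrix (Fin 3) (Fin 3) ℝ) (h1 : Oᵀ * O = 1) (h2 : O.det = -1) :
    GS (O.mulVec u) (O.mulVec v)
      = O * GS u v * Matrix.diagonal ![(1 : ℝ), 1, -1]
    ∧ GS (O.mulVec u) (O.mulVec v) ≠ O * GS u v := by
  have hGS := GS_mulVec_of_transpose_mul_self h1 u v
  rw [h2] at hGS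
  refine ⟨hGS, fun h => ?_⟩
  have hdet := congrArg det (hGS.symm.trans h)
  rw [det_mul, det_mul, det_GS hu hw, det_diagonal, Fin.prod_univ_three, h2,
    cons_val_two, tail_cons, head_cons] at hdet
  norm_num at hdet
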